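/- Hadwiger vectors under the colorful hypothesis: Let A₁, …, Aₙ be pairwise disjoint compact convex sets in ℝ², colored red, green, blue, such that for every i < j < k with Aᵢ, Aⱼ, Aₖ of three different colors there is an (f,α)-transversal intersecting them in order. Then for every direction d, the middle colorful (f,α)-separating sign vector x of the family in direction d is Hadwiger: there are no indices i < j < k with xᵢ, xⱼ, xₖ of three different colors and (xᵢ, xⱼ, xₖ) equal to (−1, 1, −1) or (1, −1, 1). -/

import Mathlib

open MeasureTheory TopologicalSpace
open scoped Classical

noncomputable section

/-- The plane. -/
abbrev Pt : Type := ℝ × ℝ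

/-- Planar cross product. -/
def pcross (v w : Pt) : ℝ := v.1 * w.2 - v.2 * w.1

/-- A directed line in the plane: a base point and a nonzero direction vector. -/
structure DLine : Type where
  p : Pt
  v : Pt
  hv : v ≠ 0

/-- The closed half-plane to the left of a directed line. -/
def DLine.left (ℓ : DLine) : Set Pt := {q | 0 ≤ pcross ℓ.v (q - ℓ.p)}

/-- The closed half-plane to the right of a directed line. -/
def DLine.right (ℓ : DLine) : Set Pt := {q | pcross ℓ.v (q - ℓ.p) ≤ 0}

/-- The set of points of the line. -/
def DLine.line (ℓ : DLine) : Set Pt := {q | pcross ℓ.v (q - ℓ.p) = 0}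

/-- Parametrization of the line along its direction. -/
def DLine.pt (ℓ : DLine) (t : ℝ) : Pt := ℓ.p + t • ℓ.v

/-- `f` is a monotone function on convex sets. -/
def MonoConvex (f : Set Pt → ℝ) : Prop :=
  ∀ A B : Set Pt, Convex ℝ A → Convex ℝ B → A ⊆ B → f A ≤ f B

/-- `ℓ` is an `(f, α)`-stabber of `C`. -/
def Stabs (f : Set Pt → ℝ) (α : ℝ) (ℓ : DLine) (C : Set Pt) : Prop :=
  α ≤ f (ℓ.left ∩ C) ∧ α ≤ f (ℓ.right ∩ C)

/-- `ℓ` meets the sets `C 0, …, C (k-1)` in this order along its direction. -/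
def MeetsInOrder (ℓ : DLine) {k : ℕ} (C : Fin k → Set Pt) : Prop :=
  ∃ t : Fin k → ℝ, Monotone t ∧ ∀ m, ℓ.pt (t m) ∈ C m

/-- `ℓ` meets three sets in the order `A, B, C`. -/
def Meets3 (ℓ : DLine) (A B C : Set Pt) : Prop :=
  ∃ s t u : ℝ, s ≤ t ∧ t ≤ u ∧ ℓ.pt s ∈ A ∧ ℓ.pt t ∈ B ∧ ℓ.pt u ∈ C

/-- `f` is continuous with respect to the Hausdorff metric on nonempty compact sets. -/
def HausCont (f : Set Pt → ℝ) : Prop :=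
  Continuous fun K : NonemptyCompacts Pt => f (K : Set Pt)

/-- The percent-area (normalized area) function of `K`. -/
def pArea (K : Set Pt) (C : Set Pt) : ℝ :=
  (volume (C ∩ K)).toReal / (volume K).toReal

/-- `ℓ` is an `(f, α)`-stabber of `K` for the percent-area function of `K`. -/
def StabsPA (α : ℝ) (ℓ : DLine) (K : Set Pt) : Prop :=
  α ≤ pArea K (ℓ.left ∩ K) ∧ α ≤ pArea K (ℓ.right ∩ K)

/-- The reduced set `C'`: points of `C` through which the line in direction `v`
is an `(f, α)`-stabber of `C` (i.e. `C` minus the maximal pieces of `f`-value `< α`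
on each side). -/
def reduceSet (f : Set Pt → ℝ) (α : ℝ) (v : Pt) (hv : v ≠ 0) (C : Set Pt) : Set Pt :=
  {x ∈ C | Stabs f α ⟨x, v, hv⟩ C}

/-- The middle value of three reals. -/
def mid3 (a b c : ℝ) : ℝ := a + b + c - max a (max b c) - min a (min b c)

/-- The colorful `(f, α)`-separating sign of a set with respect to a directed line. -/
def signOf (f : Set Pt → ℝ) (α : ℝ) (ℓ : DLine) (C : Set Pt) : ℤ :=
  if Stabs f α ℓ C then 0 else if f (ℓ.right ∩ C) < α then -1 else 1

/-- The middle `(f, α)`-separating line of a colored family in direction `d`: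
the line parallel to `d` crossing `d^⊥` at `(u₂ + v₂)/2`, where `u₂` (resp. `v₂`)
is the middle value of the color-wise sups (resp. infs) of the endpoints of the
projections of the reduced sets onto `d^⊥`. -/
def middleLine (f : Set Pt → ℝ) (α : ℝ) (d : Pt) (hd : d ≠ 0)
    {n : ℕ} (C : Fin n → Set Pt) (color : Fin n → Fin 3) : DLine :=
  let a : Fin n → ℝ := fun i => sInf ((fun x => pcross d x) '' reduceSet f α d hd (C i))
  let b : Fin n → ℝ := fun i => sSup ((fun x => pcross d x) '' reduceSet f α d hd (C i))
  let p : Fin 3 → ℝ := fun c => sSup (a '' {i | color i = c})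
  let q : Fin 3 → ℝ := fun c => sInf (b '' {i | color i = c})
  let θ : ℝ := (mid3 (p 0) (p 1) (p 2) + mid3 (q 0) (q 1) (q 2)) / 2
  ⟨(θ / (d.1 ^ 2 + d.2 ^ 2)) • (-d.2, d.1), d, hd⟩

/-- A colored sign vector is balanced if for every two colors there is a coordinate
of one color equal to `1` and a coordinate of the other color equal to `-1`. -/
def BalancedVec {n : ℕ} (x : Fin n → ℤ) (color : Fin n → Fin 3) : Prop :=
  ∀ c₁ c₂ : Fin 3, c₁ ≠ c₂ → ∃ i j : Fin n, color i = c₁ ∧ color j = c₂ ∧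
    ((x i = 1 ∧ x j = -1) ∨ (x i = -1 ∧ x j = 1))

/-- A colored sign vector is Hadwiger if no three increasing, differently colored
coordinates form the pattern `(-1, 1, -1)` or `(1, -1, 1)`. -/
def HadwigerVec {n : ℕ} (x : Fin n → ℤ) (color : Fin n → Fin 3) : Prop :=
  ∀ i j k : Fin n, i < j → j < k →
    color i ≠ color j → color i ≠ color k → color j ≠ color k →
    ¬ ((x i = -1 ∧ x j = 1 ∧ x k = -1) ∨ (x i = 1 ∧ x j = -1 ∧ x k = 1))

/-- The axis-aligned rectangle `[0,a] × [0,b]`. -/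
def rect (a b : ℝ) : Set Pt := Set.Icc (0:ℝ) a ×ˢ Set.Icc (0:ℝ) b

/-- The two short (vertical) sides of the rectangle `[0,a] × [0,b]` (for `b < a`). -/
def shortSides (a b : ℝ) : Set Pt :=
  ({(0:ℝ)} ×ˢ Set.Icc (0:ℝ) b) ∪ ({a} ×ˢ Set.Icc (0:ℝ) b)

/-- A directed line does not intersect the short sides of the rectangle. -/
def avoidsShort (a b : ℝ) (ℓ : DLine) : Prop := ℓ.line ∩ shortSides a b = ∅

/-- Every directed line through `p` avoiding the short sides cuts the rectangle into
pieces of area fractions exactly `α` and `1 - α`. -/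
def cutsExactly (a b α : ℝ) (p : Pt) : Prop :=
  ∀ ℓ : DLine, p ∈ ℓ.line → avoidsShort a b ℓ →
    ((pArea (rect a b) (ℓ.left ∩ rect a b) = α ∧
        pArea (rect a b) (ℓ.right ∩ rect a b) = 1 - α) ∨
     (pArea (rect a b) (ℓ.left ∩ rect a b) = 1 - α ∧
        pArea (rect a b) (ℓ.right ∩ rect a b) = α))

/-
The middle line plays no special role: the sign vector of any directed line `m` is Hadwiger.
A sign `-1` for `Aᵢ` means that `m.right ∩ Aᵢ` is too small for `f`, so each of the two halves of
`Aᵢ` cut off by a stabbing transversal `ℓ` pokes out of `m.right`, and by convexity `Aᵢ` meets `ℓ`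
strictly left of `m`. For the pattern `(-1, 1, -1)` this gives points of `Aᵢ, Aⱼ, Aₖ` on `ℓ` at
parameters `tᵢ, tⱼ, tₖ` with `ℓ(tᵢ), ℓ(tₖ) ∈ m.left` and `ℓ(tⱼ) ∉ m.left`. Since the sets are
convex, disjoint and met in order by `ℓ`, `tᵢ < tⱼ < tₖ`, contradicting convexity of `m.left`.
-/

lemma pcross_sub_right (v q p : Pt) : pcross v (q - p) = pcross v q - pcross v p := by
  simp only [pcross, Prod.fst_sub, Prod.snd_sub]; ring

lemma isLinearMap_pcross (v : Pt) : IsLinearMap ℝ (pcross v) where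
  map_add x y := by simp only [pcross, Prod.fst_add, Prod.snd_add]; ring
  map_smul c x := by simp only [pcross, Prod.smul_fst, Prod.smul_snd, smul_eq_mul]; ring

namespace DLine

variable (ℓ : DLine)

lemma convex_left : Convex ℝ ℓ.left := by
  simpa only [DLine.left, pcross_sub_right, sub_nonneg] using
    convex_halfSpace_ge (isLinearMap_pcross ℓ.v) (pcross ℓ.v ℓ.p)

lemma convex_right : Convex ℝ ℓ.right := by
  simpa only [DLine.right, pcross_sub_right, sub_nonpos] using
    convex_halfSpace_le (isLinearMap_pcross ℓ.v) (pcross ℓ.v ℓ.p)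

lemma convex_compl_left : Convex ℝ ℓ.leftᶜ := by
  simpa only [DLine.left, Set.compl_ofPred, not_le, pcross_sub_right, sub_neg] using
    convex_halfSpace_lt (isLinearMap_pcross ℓ.v) (pcross ℓ.v ℓ.p)

lemma convex_compl_right : Convex ℝ ℓ.rightᶜ := by
  simpa only [DLine.right, Set.compl_ofPred, not_le, pcross_sub_right, sub_pos] using
    convex_halfSpace_gt (isLinearMap_pcross ℓ.v) (pcross ℓ.v ℓ.p)

lemma compl_right_subset_left : ℓ.rightᶜ ⊆ ℓ.left := by
  intro q hq
  simp only [DLine.right, DLine.left, Set.mem_compl_iff, Set.mem_ofPred_eq, not_le] at hq ⊢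
  exact hq.le

lemma convex_preimage_pt {C : Set Pt} (hC : Convex ℝ C) : Convex ℝ (ℓ.pt ⁻¹' C) := by
  have hpt : ℓ.pt = AffineMap.lineMap ℓ.p (ℓ.p + ℓ.v) := by
    ext t <;> simp [DLine.pt, AffineMap.lineMap_apply] <;> ring
  rw [hpt]
  exact hC.affine_preimage _

lemma exists_pt_eq_of_mem_line {z : Pt} (hz : z ∈ ℓ.line) : ∃ t, ℓ.pt t = z := by
  have hv : ℓ.v.1 ^ 2 + ℓ.v.2 ^ 2 ≠ 0 := by
    intro h0
    obtain ⟨h1, h2⟩ := (add_eq_zero_iff_of_nonneg (sq_nonneg _) (sq_nonneg _)).mp h0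
    exact ℓ.hv (Prod.ext (sq_eq_zero_iff.mp h1) (sq_eq_zero_iff.mp h2))
  simp only [DLine.line, Set.mem_ofPred_eq, pcross, Prod.fst_sub, Prod.snd_sub] at hz
  refine ⟨(ℓ.v.1 * (z.1 - ℓ.p.1) + ℓ.v.2 * (z.2 - ℓ.p.2)) / (ℓ.v.1 ^ 2 + ℓ.v.2 ^ 2), ?_⟩
  ext
  · simp only [DLine.pt, Prod.fst_add, Prod.smul_fst, smul_eq_mul]
    field_simp
    linear_combination ℓ.v.2 * hz
  · simp only [DLine.pt, Prod.snd_add, Prod.smul_snd, smul_eq_mul]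
    field_simp
    linear_combination (-ℓ.v.1) * hz

lemma exists_pt_mem_of_left_of_right {K : Set Pt} (hK : Convex ℝ K)
    {q₁ q₂ : Pt} (hq₁ : q₁ ∈ ℓ.left ∩ K) (hq₂ : q₂ ∈ ℓ.right ∩ K) : ∃ t, ℓ.pt t ∈ K := by
  have hφ : Continuous fun q : Pt => pcross ℓ.v (q - ℓ.p) := by
    unfold pcross; fun_prop
  obtain ⟨z, hzK, hz⟩ := hK.isPreconnected.intermediate_value hq₂.2 hq₁.2 hφ.continuousOn
    ⟨hq₂.1, hq₁.1⟩
  obtain ⟨t, rfl⟩ := ℓ.exists_pt_eq_of_mem_line hz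
  exact ⟨t, hzK⟩

end DLine

lemma MonoConvex.exists_mem_inter_notMem {f : Set Pt → ℝ} (hf : MonoConvex f) {α : ℝ}
    {C H S : Set Pt} (hC : Convex ℝ C) (hH : Convex ℝ H) (hS : Convex ℝ S)
    (hH_ge : α ≤ f (H ∩ C)) (hS_lt : f (S ∩ C) < α) : ∃ q ∈ H ∩ C, q ∉ S := by
  by_contra! hsub
  have := hf _ _ (hH.inter hC) (hS.inter hC) fun q hq => ⟨hsub q hq, hq.2⟩
  linarith

lemma Stabs.exists_pt_mem_notMem {f : Set Pt → ℝ} (hf : MonoConvex f) {α : ℝ} {ℓ : DLine}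
    {C S : Set Pt} (hstab : Stabs f α ℓ C) (hC : Convex ℝ C) (hS : Convex ℝ S)
    (hSc : Convex ℝ Sᶜ) (hS_lt : f (S ∩ C) < α) : ∃ t, ℓ.pt t ∈ C ∩ Sᶜ := by
  obtain ⟨q₁, hq₁, hq₁S⟩ := hf.exists_mem_inter_notMem hC ℓ.convex_left hS hstab.1 hS_lt
  obtain ⟨q₂, hq₂, hq₂S⟩ := hf.exists_mem_inter_notMem hC ℓ.convex_right hS hstab.2 hS_lt
  exact ℓ.exists_pt_mem_of_left_of_right (hC.inter hSc) ⟨hq₁.1, hq₁.2, hq₁S⟩ ⟨hq₂.1, hq₂.2, hq₂S⟩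

lemma Set.OrdConnected.lt_of_disjoint {β : Type*} [LinearOrder β] {S T : Set β}
    (hS : S.OrdConnected) (hT : T.OrdConnected) (hST : Disjoint S T) {s t : β}
    (hs : s ∈ S) (ht : t ∈ T) (hst : s ≤ t) {x y : β} (hx : x ∈ S) (hy : y ∈ T) : x < y := by
  by_contra! hyx
  rcases le_total t x with htx | hxt
  · exact hST.notMem_of_mem_left (hS.out hs hx ⟨hst, htx⟩) ht
  · exact hST.notMem_of_mem_left hx (hT.out hy ht ⟨hyx, hxt⟩)

lemma DLine.lt_of_meets {ℓ : DLine} {A B : Set Pt} (hA : Convex ℝ A) (hB : Convex ℝ B)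
    (hAB : Disjoint A B) {s t : ℝ} (hst : s ≤ t) (hs : ℓ.pt s ∈ A) (ht : ℓ.pt t ∈ B)
    {x y : ℝ} (hx : ℓ.pt x ∈ A) (hy : ℓ.pt y ∈ B) : x < y :=
  (ℓ.convex_preimage_pt hA).ordConnected.lt_of_disjoint (ℓ.convex_preimage_pt hB).ordConnected
    (hAB.preimage ℓ.pt) hs ht hst hx hy

/-- The paper's quantitative separation lemma; `S`, `T` are the two closed sides of a line, in
either orientation. -/
lemma not_meets3_of_lt {f : Set Pt → ℝ} (hf : MonoConvex f) {α : ℝ} {S T : Set Pt}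
    (hS : Convex ℝ S) (hT : Convex ℝ T) (hSc : Convex ℝ Sᶜ) (hTc : Convex ℝ Tᶜ) (hST : Sᶜ ⊆ T)
    {A B C : Set Pt} (hA : Convex ℝ A) (hB : Convex ℝ B) (hC : Convex ℝ C)
    (hAB : Disjoint A B) (hBC : Disjoint B C)
    (hA_lt : f (S ∩ A) < α) (hB_lt : f (T ∩ B) < α) (hC_lt : f (S ∩ C) < α)
    {ℓ : DLine} (hℓA : Stabs f α ℓ A) (hℓB : Stabs f α ℓ B) (hℓC : Stabs f α ℓ C) :
    ¬ Meets3 ℓ A B C := by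
  rintro ⟨s, t, u, hst, htu, hs, ht, hu⟩
  obtain ⟨x, hxA, hxS⟩ := hℓA.exists_pt_mem_notMem hf hA hS hSc hA_lt
  obtain ⟨y, hyB, hyT⟩ := hℓB.exists_pt_mem_notMem hf hB hT hTc hB_lt
  obtain ⟨z, hzC, hzS⟩ := hℓC.exists_pt_mem_notMem hf hC hS hSc hC_lt
  have hxy : x < y := DLine.lt_of_meets hA hB hAB hst hs ht hxA hyB
  have hyz : y < z := DLine.lt_of_meets hB hC hBC htu ht hu hyB hzC
  exact hyT ((ℓ.convex_preimage_pt hT).ordConnected.out (hST hxS) (hST hzS) ⟨hxy.le, hyz.le⟩)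

lemma signOf_eq_neg_one {f : Set Pt → ℝ} {α : ℝ} {ℓ : DLine} {C : Set Pt}
    (h : signOf f α ℓ C = -1) : f (ℓ.right ∩ C) < α := by
  unfold signOf at h
  split_ifs at h with _ hr
  exact hr

lemma signOf_eq_one {f : Set Pt → ℝ} {α : ℝ} {ℓ : DLine} {C : Set Pt}
    (h : signOf f α ℓ C = 1) : f (ℓ.left ∩ C) < α := by
  unfold signOf at h
  split_ifs at h with hs hr <;> norm_num at h
  exact not_le.mp fun hl => hs ⟨hl, not_lt.mp hr⟩

theorem hadwigerVec_signOf {n : ℕ} {A : Fin n → Set Pt} {color : Fin n → Fin 3}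
    (hconv : ∀ i, Convex ℝ (A i)) (hdisj : Pairwise (Function.onFun Disjoint A))
    {f : Set Pt → ℝ} (hf : MonoConvex f) {α : ℝ}
    (h : ∀ i j k : Fin n, i < j → j < k →
      color i ≠ color j → color i ≠ color k → color j ≠ color k →
      ∃ ℓ : DLine, Stabs f α ℓ (A i) ∧ Stabs f α ℓ (A j) ∧ Stabs f α ℓ (A k) ∧
        Meets3 ℓ (A i) (A j) (A k))
    (m : DLine) : HadwigerVec (fun i => signOf f α m (A i)) color := by
  intro i j k hij hjk hcij hcik hcjk hpat
  obtain ⟨ℓ, hℓi, hℓj, hℓk, hmeets⟩ := h i j k hij hjk hcij hcik hcjk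
  rcases hpat with ⟨hi, hj, hk⟩ | ⟨hi, hj, hk⟩
  · exact not_meets3_of_lt hf m.convex_right m.convex_left m.convex_compl_right
      m.convex_compl_left m.compl_right_subset_left (hconv i) (hconv j) (hconv k)
      (hdisj hij.ne) (hdisj hjk.ne) (signOf_eq_neg_one hi) (signOf_eq_one hj)
      (signOf_eq_neg_one hk) hℓi hℓj hℓk hmeets
  · exact not_meets3_of_lt hf m.convex_left m.convex_right m.convex_compl_left
      m.convex_compl_right (Set.compl_subset_comm.mp m.compl_right_subset_left)
      (hconv i) (hconv j) (hconv k) (hdisj hij.ne) (hdisj hjk.ne) (signOf_eq_one hi)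
      (signOf_eq_neg_one hj) (signOf_eq_one hk) hℓi hℓj hℓk hmeets

theorem stmt13_general (n : ℕ) (A : Fin n → Set Pt) (color : Fin n → Fin 3)
    (hconv : ∀ i, Convex ℝ (A i))
    (hdisj : Pairwise (Function.onFun Disjoint A))
    (f : Set Pt → ℝ) (hf : MonoConvex f) (α : ℝ)
    (h : ∀ i j k : Fin n, i < j → j < k →
      color i ≠ color j → color i ≠ color k → color j ≠ color k →
      ∃ ℓ : DLine, Stabs f α ℓ (A i) ∧ Stabs f α ℓ (A j) ∧ Stabs f α ℓ (A k) ∧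
        Meets3 ℓ (A i) (A j) (A k)) :
    ∀ (d : Pt) (hd : d ≠ 0),
      HadwigerVec (fun i => signOf f α (middleLine f α d hd A color) (A i)) color :=
  fun d hd => hadwigerVec_signOf hconv hdisj hf h (middleLine f α d hd A color)

/-- under the colorful in-order transversal hypothesis for pairwise
disjoint sets, the middle colorful `(f,α)`-separating sign vector in every direction
is Hadwiger. -/
theorem stmt13 (n : ℕ) (A : Fin n → Set Pt) (color : Fin n → Fin 3)
    (hcomp : ∀ i, IsCompact (A i)) (hconv : ∀ i, Convex ℝ (A i))
    (hdisj : Pairwise (Function.onFun Disjoint A))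
    (f : Set Pt → ℝ) (hf : MonoConvex f) (α : ℝ) (hα : 0 < α)
    (h : ∀ i j k : Fin n, i < j → j < k →
      color i ≠ color j → color i ≠ color k → color j ≠ color k →
      ∃ ℓ : DLine, Stabs f α ℓ (A i) ∧ Stabs f α ℓ (A j) ∧ Stabs f α ℓ (A k) ∧
        Meets3 ℓ (A i) (A j) (A k)) :
    ∀ (d : Pt) (hd : d ≠ 0),
      HadwigerVec (fun i => signOf f α (middleLine f α d hd A color) (A i)) color :=
  stmt13_general n A color hconv hdisj f hf α h
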